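/- arXiv:2106.00155 — 3 statements merged into one kernel-verified Lean document; each statement's English description precedes it below -/
import Mathlib

section
/- Let N ≥ 2 and let M be an N×N complex Hermitian matrix with trace 1 such that Tr[M²] ≤ 1/(N−1). Then M is positive semidefinite, i.e., M is a density matrix. Equivalently, the closed ball of radius r_N = √(2/(N(N−1))) centered at the origin of ℝ^{N²-1} is contained in Bloch space 𝛃(Q_N). -/
/-!
Everything reduces to the eigenvalues `λ` of `M`: `∑ λᵢ = 1` and `∑ λᵢ² ≤ 1/(N-1)`.
Cauchy–Schwarz applied to the other `N - 1` eigenvalues gives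
`(1 - λⱼ)² ≤ (N - 1)(∑ λᵢ² - λⱼ²) ≤ 1 - (N - 1)λⱼ²`, i.e. `λⱼ (N λⱼ - 2) ≤ 0`,
which is impossible for `λⱼ < 0`.
-/

open scoped ComplexOrder

theorem nonneg_of_sum_eq_one_of_sum_sq_le_inv {ι : Type*} [Fintype ι] {x : ι → ℝ}
    (hsum : ∑ i, x i = 1) (hsq : ∑ i, x i ^ 2 ≤ 1 / ((Fintype.card ι : ℝ) - 1)) (j : ι) :
    0 ≤ x j := by
  classical
  set n : ℝ := (Fintype.card ι : ℝ)
  have hcard : ((Finset.univ.erase j).card : ℝ) = n - 1 := by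
    rw [Finset.card_erase_of_mem (Finset.mem_univ j),
      Nat.cast_pred (Finset.card_pos.2 ⟨j, Finset.mem_univ j⟩)]
    rfl
  have hn : 0 ≤ n - 1 := hcard ▸ Nat.cast_nonneg _
  have hrest : ∑ i ∈ Finset.univ.erase j, x i = 1 - x j := by
    rw [← hsum, ← Finset.add_sum_erase _ _ (Finset.mem_univ j), add_sub_cancel_left]
  have hrest_sq : ∑ i ∈ Finset.univ.erase j, x i ^ 2 = ∑ i, x i ^ 2 - x j ^ 2 := by
    rw [← Finset.add_sum_erase _ _ (Finset.mem_univ j), add_sub_cancel_left]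
  have hcs : (1 - x j) ^ 2 ≤ (n - 1) * (∑ i, x i ^ 2 - x j ^ 2) := by
    simpa only [hrest, hrest_sq, hcard] using
      sq_sum_le_card_mul_sum_sq (s := Finset.univ.erase j) (f := x)
  have hpur : (∑ i, x i ^ 2) * (n - 1) ≤ 1 := mul_le_of_le_div₀ zero_le_one hn hsq
  have hquad : x j * (n * x j - 2) ≤ 0 := by nlinarith
  by_contra! hneg
  nlinarith [mul_pos (neg_pos.2 hneg) (show 0 < 2 - n * x j by nlinarith)]

theorem Matrix.trace_conjStarAlgAut {𝕜 n : Type*} [RCLike 𝕜] [Fintype n] [DecidableEq n]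
    (U : Matrix.unitaryGroup n 𝕜) (X : Matrix n n 𝕜) :
    (Unitary.conjStarAlgAut 𝕜 _ U X).trace = X.trace := by
  rw [Unitary.conjStarAlgAut_apply, Matrix.trace_mul_cycle, Unitary.coe_star_mul_self, one_mul]

theorem Matrix.IsHermitian.trace_mul_self_eq_sum_sq_eigenvalues {𝕜 n : Type*} [RCLike 𝕜]
    [Fintype n] [DecidableEq n] {A : Matrix n n 𝕜} (hA : A.IsHermitian) :
    (A * A).trace = ∑ i, (hA.eigenvalues i : 𝕜) ^ 2 := by
  conv_lhs => rw [hA.spectral_theorem, ← map_mul, Matrix.trace_conjStarAlgAut,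
    Matrix.diagonal_mul_diagonal, Matrix.trace_diagonal]
  simp only [Function.comp_apply, sq]

theorem hermitian_trace_one_small_purity_posSemidef_general
    (N : ℕ) (M : Matrix (Fin N) (Fin N) ℂ)
    (hM : M.IsHermitian) (htr : M.trace = 1)
    (hpur : (M * M).trace ≤ 1 / ((N : ℂ) - 1)) :
    M.PosSemidef := by
  have hsum : ∑ i, hM.eigenvalues i = 1 := by
    rw [hM.trace_eq_sum_eigenvalues] at htr
    simp only [Complex.coe_algebraMap] at htr
    exact_mod_cast htr
  have hsq : ∑ i, hM.eigenvalues i ^ 2 ≤ 1 / ((Fintype.card (Fin N) : ℝ) - 1) := by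
    rw [hM.trace_mul_self_eq_sum_sq_eigenvalues] at hpur
    simp only [Complex.coe_algebraMap] at hpur
    rw [Fintype.card_fin]
    exact_mod_cast hpur
  exact hM.posSemidef_iff_eigenvalues_nonneg.2 (nonneg_of_sum_eq_one_of_sum_sq_le_inv hsum hsq)

/-- Let `N ≥ 2` and let `M` be an `N×N` complex Hermitian matrix with
trace 1 such that `Tr[M²] ≤ 1/(N−1)`. Then `M` is positive semidefinite, i.e. a density
matrix. Equivalently, the closed ball of radius `r_N = √(2/(N(N−1)))` centered at the
origin of `ℝ^{N²−1}` is contained in Bloch space. -/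
theorem hermitian_trace_one_small_purity_posSemidef
    (N : ℕ) (hN : 2 ≤ N) (M : Matrix (Fin N) (Fin N) ℂ)
    (hM : M.IsHermitian) (htr : M.trace = 1)
    (hpur : (M * M).trace ≤ 1 / ((N : ℂ) - 1)) :
    M.PosSemidef :=
  hermitian_trace_one_small_purity_posSemidef_general N M hM htr hpur
end

section
/- Let N ≥ 2 and let ρ be an N×N density matrix that is not invertible and satisfies Tr[ρ²] = 1/(N−1). Then the matrix σ := I − (N−1)ρ is a pure state: σ is a density matrix and there exists a unit vector ψ ∈ ℂ^N with σ = ψψ*. In Bloch space terms: if u is a unit vector in ℝ^{N²-1} such that u·r_N lies on the boundary of Bloch space, then −u·R_N lies on the boundary of Bloch space (and is the Bloch vector of a pure state). -/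
open scoped ComplexOrder

/-- Let `N ≥ 2` and let `ρ` be an `N×N` density matrix that is not
invertible and satisfies `Tr[ρ²] = 1/(N−1)`. Then `σ := I − (N−1)ρ` is a pure state:
`σ` is a density matrix and there is a unit vector `ψ` with `σ = ψψ*`. In Bloch space
terms: if `u·r_N` lies on the boundary of Bloch space for a unit vector `u`, then
`−u·R_N` is the Bloch vector of a pure state (dual pairs of boundary points). -/
theorem dual_pair_of_insphere_boundary_point
    (N : ℕ) (hN : 2 ≤ N) (ρ : Matrix (Fin N) (Fin N) ℂ)
    (hρ : ρ.PosSemidef) (htr : ρ.trace = 1)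
    (hsing : ¬ IsUnit ρ) (hpur : (ρ * ρ).trace = 1 / ((N : ℂ) - 1)) :
    ((1 : Matrix (Fin N) (Fin N) ℂ) - ((N : ℂ) - 1) • ρ).PosSemidef ∧
    ((1 : Matrix (Fin N) (Fin N) ℂ) - ((N : ℂ) - 1) • ρ).trace = 1 ∧
    ∃ ψ : Fin N → ℂ, (∑ i, ‖ψ i‖ ^ 2 = 1) ∧
      (1 : Matrix (Fin N) (Fin N) ℂ) - ((N : ℂ) - 1) • ρ =
        Matrix.vecMulVec ψ (star ψ) := by
  classical
  have hH : ρ.IsHermitian := hρ.1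
  set U : Matrix (Fin N) (Fin N) ℂ := (hH.eigenvectorUnitary : Matrix (Fin N) (Fin N) ℂ) with hUdef
  have hUU : star U * U = 1 := Unitary.coe_star_mul_self _
  have hUU' : U * star U = 1 := Unitary.coe_mul_star_self _
  set lam := hH.eigenvalues with hlamdef
  have hspec : ρ = U * Matrix.diagonal (fun i => (lam i : ℂ)) * star U := hH.spectral_theorem
  have hNpos : (0:ℝ) < (N:ℝ) - 1 := by
    have : (2:ℝ) ≤ N := by exact_mod_cast hN
    linarith
  have hN1 : ((N:ℝ) - 1) ≠ 0 := ne_of_gt hNpos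
  have hN1C : ((N:ℂ) - 1) ≠ 0 := by
    intro h
    apply hN1
    have := congrArg Complex.re h
    simpa using this
  -- trace of diagonalized matrix
  have htrdiag : ρ.trace = ∑ i, (lam i : ℂ) := by
    rw [hspec, Matrix.trace_mul_cycle, hUU, one_mul, Matrix.trace_diagonal]
  have htr1 : ∑ i, lam i = 1 := by
    have h : ((∑ i, lam i : ℝ) : ℂ) = 1 := by
      push_cast
      rw [← htrdiag, htr]
    exact_mod_cast h
  have hconj : ∀ E : Matrix (Fin N) (Fin N) ℂ,
      (U * E * star U) * (U * E * star U) = U * (E * E) * star U := by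
    intro E
    calc (U * E * star U) * (U * E * star U) = U * E * (star U * U) * E * star U := by
          simp only [mul_assoc]
      _ = U * (E * E) * star U := by rw [hUU, mul_one]; simp only [mul_assoc]
  have hsq : ρ * ρ = U * Matrix.diagonal (fun i => (lam i : ℂ) * (lam i : ℂ)) * star U := by
    rw [hspec, hconj, Matrix.diagonal_mul_diagonal]
  have htr2 : ∑ i, (lam i)^2 = ((N:ℝ) - 1)⁻¹ := by
    have h : ((∑ i, (lam i)^2 : ℝ) : ℂ) = 1 / ((N:ℂ) - 1) := by
      rw [← hpur, hsq, Matrix.trace_mul_cycle, hUU, one_mul, Matrix.trace_diagonal]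
      push_cast
      simp [pow_two]
    have h2 : ((∑ i, (lam i)^2 : ℝ) : ℂ) = ((((N:ℝ) - 1)⁻¹ : ℝ) : ℂ) := by
      rw [h]; push_cast; rw [one_div]
    exact_mod_cast h2
  -- a zero eigenvalue
  have hdet : ρ.det = 0 := by
    by_contra h
    exact hsing ((Matrix.isUnit_iff_isUnit_det ρ).2 (isUnit_iff_ne_zero.2 h))
  obtain ⟨j, -, hj0⟩ : ∃ j ∈ Finset.univ, (lam j : ℂ) = 0 := by
    rw [← Finset.prod_eq_zero_iff]
    have h := hH.det_eq_prod_eigenvalues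
    rw [hdet] at h
    exact h.symm
  have hj : lam j = 0 := by exact_mod_cast hj0
  -- all other eigenvalues equal c
  set c : ℝ := ((N:ℝ) - 1)⁻¹ with hcdef
  have hkey : ∀ i, i ≠ j → lam i = c := by
    have hexp : ∑ i, (lam i - c)^2 = ∑ i, (lam i)^2 - 2*c*(∑ i, lam i) + N * c^2 := by
      rw [Finset.mul_sum, ← Finset.sum_sub_distrib]
      have : (N:ℝ) * c^2 = ∑ _i : Fin N, c^2 := by
        simp [Finset.card_univ]
      rw [this, ← Finset.sum_add_distrib]
      apply Finset.sum_congr rfl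
      intro i _
      ring
    have hsum0 : ∑ i ∈ Finset.univ.erase j, (lam i - c)^2 = 0 := by
      have herase : ∑ i ∈ Finset.univ.erase j, (lam i - c)^2
          = ∑ i, (lam i - c)^2 - (lam j - c)^2 :=
        Finset.sum_erase_eq_sub (Finset.mem_univ j)
      have hc1 : ((N:ℝ) - 1) * c = 1 := by
        rw [hcdef]
        field_simp
      rw [herase, hexp, htr1, htr2, hj]
      linear_combination c * hc1
    intro i hi
    have := (Finset.sum_eq_zero_iff_of_nonneg (fun i _ => sq_nonneg (lam i - c))).1 hsum0 i
      (Finset.mem_erase.2 ⟨hi, Finset.mem_univ i⟩)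
    have := pow_eq_zero_iff (n := 2) (by norm_num) |>.1 this
    linarith [sub_eq_zero.1 this]
  -- sigma as conjugation of a single-entry diagonal
  have hc1C : ((N:ℂ) - 1) * (c:ℂ) = 1 := by
    rw [hcdef]
    push_cast
    field_simp
  have hdval : (fun i => 1 - ((N:ℂ) - 1) * (lam i : ℂ)) = Pi.single j (1:ℂ) := by
    funext i
    by_cases h : i = j
    · subst h
      simp [hj]
    · have hlc : (lam i : ℂ) = (c : ℝ) := by exact_mod_cast hkey i h
      simp [Pi.single_apply, h, hlc, hc1C]
  have hdiag : (1 : Matrix (Fin N) (Fin N) ℂ) - ((N:ℂ) - 1) • Matrix.diagonal (fun i => (lam i : ℂ))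
      = Matrix.diagonal (Pi.single j 1) := by
    rw [← Matrix.diagonal_one, ← Matrix.diagonal_smul, Matrix.diagonal_sub]
    exact congrArg Matrix.diagonal hdval
  have hsigma : (1 : Matrix (Fin N) (Fin N) ℂ) - ((N:ℂ) - 1) • ρ
      = U * Matrix.diagonal (Pi.single j 1) * star U := by
    rw [← hdiag, hspec]
    rw [Matrix.mul_sub, Matrix.sub_mul, Matrix.mul_smul, Matrix.smul_mul, mul_one, hUU']
  -- the vector
  set ψ : Fin N → ℂ := fun i => U i j with hψdef
  have hvec : U * Matrix.diagonal (Pi.single j 1) * star U = Matrix.vecMulVec ψ (star ψ) := by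
    ext a b
    rw [Matrix.mul_apply]
    simp only [Matrix.mul_diagonal, Matrix.vecMulVec_apply, Pi.single_apply, Pi.star_apply,
      Matrix.star_apply, mul_ite, ite_mul, mul_one, zero_mul, mul_zero, one_mul]
    rw [Finset.sum_ite_eq' Finset.univ j]
    simp [hψdef]
  have hnorm : ∑ i, ‖ψ i‖ ^ 2 = 1 := by
    have h := congrFun (congrFun hUU j) j
    rw [Matrix.mul_apply, Matrix.one_apply_eq] at h
    have h2 : ((∑ i, ‖U i j‖ ^ 2 : ℝ) : ℂ) = 1 := by
      rw [Complex.ofReal_sum, ← h]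
      refine Finset.sum_congr rfl fun k _ => ?_
      rw [Matrix.star_apply, show (star (U k j)) = (starRingEnd ℂ) (U k j) from rfl,
        RCLike.conj_mul]
      norm_cast
    show ∑ i, ‖U i j‖ ^ 2 = 1
    exact_mod_cast h2
  refine ⟨?_, ?_, ψ, hnorm, by rw [hsigma, hvec]⟩
  · rw [hsigma, hvec, Matrix.vecMulVec_eq (Fin 1), ← Matrix.conjTranspose_replicateCol]
    exact Matrix.posSemidef_self_mul_conjTranspose _
  · rw [Matrix.trace_sub, Matrix.trace_smul, htr, Matrix.trace_one]
    simp
end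

section
/- Let N ≥ 2 and let ψ ∈ ℂ^N be a unit vector, with associated pure state P = ψψ*. Then ρ := (I − P)/(N−1) is a density matrix which is not invertible and satisfies Tr[ρ²] = 1/(N−1). In particular, there exist non-invertible density matrices whose Bloch vectors have norm exactly r_N = √(2/(N(N−1))), so the insphere of Bloch space touches the boundary of Bloch space and its radius r_N is optimal. -/
/-!
`P = ψψ*` is a star projection of trace `⟨ψ, ψ⟩ = 1`, so `I - P` is a star projection, hence
positive semidefinite, of trace `N - 1`, and it annihilates `ψ`. Scaling by `c = 1/(N - 1)` gives
trace one, and idempotence of `I - P` gives `Tr[ρ²] = c² (N - 1) = 1/(N - 1)`.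
-/

open scoped ComplexOrder

namespace Matrix

variable {n α : Type*} [Fintype n]

theorem star_dotProduct_self_eq_sum_norm_sq {𝕜 : Type*} [RCLike 𝕜] (ψ : n → 𝕜) :
    star ψ ⬝ᵥ ψ = ((∑ i, ‖ψ i‖ ^ 2 : ℝ) : 𝕜) := by
  simp [dotProduct, RCLike.conj_mul]

theorem isStarProjection_vecMulVec_star [Semiring α] [StarRing α] {ψ : n → α}
    (hψ : star ψ ⬝ᵥ ψ = 1) : IsStarProjection (vecMulVec ψ (star ψ)) where
  isIdempotentElem := by rw [IsIdempotentElem, vecMulVec_mul_vecMulVec, hψ, one_smul]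
  isSelfAdjoint := by rw [IsSelfAdjoint, star_eq_conjTranspose, conjTranspose_vecMulVec, star_star]

theorem one_sub_vecMulVec_star_mulVec_self [DecidableEq n] [Ring α] [StarRing α] {ψ : n → α}
    (hψ : star ψ ⬝ᵥ ψ = 1) : (1 - vecMulVec ψ (star ψ)) *ᵥ ψ = 0 := by
  rw [sub_mulVec, one_mulVec, vecMulVec_mulVec, hψ, MulOpposite.op_one, one_smul, sub_self]

theorem trace_one_sub_vecMulVec_star [DecidableEq n] [CommRing α] [StarRing α] {ψ : n → α}
    (hψ : star ψ ⬝ᵥ ψ = 1) : trace (1 - vecMulVec ψ (star ψ)) = (Fintype.card n : α) - 1 := by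
  rw [trace_sub, trace_one, trace_vecMulVec, dotProduct_comm, hψ]

theorem IsStarProjection.posSemidef [CommRing α] [PartialOrder α] [StarRing α] [StarOrderedRing α]
    {P : Matrix n n α} (hP : IsStarProjection P) : P.PosSemidef := by
  simpa [← star_eq_conjTranspose, hP.isSelfAdjoint.star_eq, hP.isIdempotentElem.eq]
    using posSemidef_conjTranspose_mul_self P

theorem trace_smul_mul_smul_of_isIdempotentElem [CommSemiring α] {Q : Matrix n n α}
    (hQ : IsIdempotentElem Q) (c : α) : trace (c • Q * (c • Q)) = c * c * trace Q := by
  rw [smul_mul_smul_comm, hQ.eq, trace_smul, smul_eq_mul]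

theorem not_isUnit_of_mulVec_eq_zero [DecidableEq n] {K : Type*} [Field K] {A : Matrix n n K}
    {v : n → K} (hv : v ≠ 0) (hAv : A *ᵥ v = 0) : ¬IsUnit A := fun hA =>
  hv <| mulVec_injective_iff_isUnit.2 hA <| by rw [hAv, mulVec_zero]

end Matrix

open Matrix in
/-- Let `N ≥ 2` and let `ψ ∈ ℂ^N` be a unit vector with associated pure
state `P = ψψ*`. Then `ρ := (I − P)/(N−1)` is a density matrix which is not invertible
and satisfies `Tr[ρ²] = 1/(N−1)`. In particular there exist non-invertible density
matrices whose Bloch vectors have norm exactly `r_N = √(2/(N(N−1)))`: the insphere of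
Bloch space touches the boundary of Bloch space, so its radius `r_N` is optimal. -/
theorem orthocomplement_of_pure_state_touches_insphere
    (N : ℕ) (hN : 2 ≤ N) (ψ : Fin N → ℂ) (hψ : ∑ i, ‖ψ i‖ ^ 2 = 1) :
    (((N : ℂ) - 1)⁻¹ •
        ((1 : Matrix (Fin N) (Fin N) ℂ) - Matrix.vecMulVec ψ (star ψ))).PosSemidef ∧
    (((N : ℂ) - 1)⁻¹ •
        ((1 : Matrix (Fin N) (Fin N) ℂ) - Matrix.vecMulVec ψ (star ψ))).trace = 1 ∧
    ¬ IsUnit (((N : ℂ) - 1)⁻¹ •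
        ((1 : Matrix (Fin N) (Fin N) ℂ) - Matrix.vecMulVec ψ (star ψ))) ∧
    ((((N : ℂ) - 1)⁻¹ •
          ((1 : Matrix (Fin N) (Fin N) ℂ) - Matrix.vecMulVec ψ (star ψ))) *
        (((N : ℂ) - 1)⁻¹ •
          ((1 : Matrix (Fin N) (Fin N) ℂ) - Matrix.vecMulVec ψ (star ψ)))).trace =
      1 / ((N : ℂ) - 1) := by
  have hunit : star ψ ⬝ᵥ ψ = 1 := by simp [star_dotProduct_self_eq_sum_norm_sq, hψ]
  have hψ0 : ψ ≠ 0 := by rintro rfl; simp at hunit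
  have hQ := (isStarProjection_vecMulVec_star hunit).one_sub
  have htrace : trace (1 - vecMulVec ψ (star ψ)) = (N : ℂ) - 1 := by
    simpa using trace_one_sub_vecMulVec_star hunit
  have hN1 : (1 : ℂ) < N := by exact_mod_cast hN
  refine ⟨hQ.posSemidef.smul (inv_nonneg.2 (sub_nonneg.2 hN1.le)), ?_, ?_, ?_⟩
  · rw [trace_smul, htrace, smul_eq_mul, inv_mul_cancel₀ (sub_ne_zero.2 hN1.ne')]
  · refine not_isUnit_of_mulVec_eq_zero hψ0 ?_
    rw [smul_mulVec, one_sub_vecMulVec_star_mulVec_self hunit, smul_zero]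
  · rw [trace_smul_mul_smul_of_isIdempotentElem hQ.isIdempotentElem, htrace]
    field_simp [sub_ne_zero.2 hN1.ne']
end
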